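/- arXiv:1411.0071 — 5 statements merged into one kernel-verified Lean document; each statement's English description precedes it below -/
import Mathlib

section
/- Let P and Q be real polynomials and let φ : (-1,1) → ℝ be given by φ(ρ) = (1-ρ)^{-1/2}·P(√(1-ρ)) + (1+ρ)^{-1/2}·Q(√(1+ρ)). Then the function σ ↦ φ(cos σ)·sin σ, defined for σ ∈ (0,π), agrees on (0,π) with the function g(σ) = √2·cos(σ/2)·P(√2·sin(σ/2)) + √2·sin(σ/2)·Q(√2·cos(σ/2)), which is infinitely differentiable (C^∞) on all of ℝ. In particular φ(cos σ)·sin σ extends to a smooth function on [0,π]. -/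
open Real Set

/-- Lemma 5.1 of the paper: for a density φ on (-1,1) with inverse-square-root
endpoint behaviour given by polynomials `P`, `Q`, the function
`σ ↦ φ (cos σ) * sin σ` agrees on `(0, π)` with the explicitly given function
`g σ = √2 cos(σ/2) P(√2 sin(σ/2)) + √2 sin(σ/2) Q(√2 cos(σ/2))`, which is
`C^∞` on all of `ℝ`. -/
theorem zaremba_density_cosine_change_smooth
    (P Q : Polynomial ℝ) (φ : ℝ → ℝ)
    (hφ : ∀ ρ ∈ Set.Ioo (-1 : ℝ) 1,
      φ ρ = (1 - ρ) ^ (-(1/2 : ℝ)) * P.eval (Real.sqrt (1 - ρ))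
          + (1 + ρ) ^ (-(1/2 : ℝ)) * Q.eval (Real.sqrt (1 + ρ)))
    (g : ℝ → ℝ)
    (hg : ∀ σ : ℝ,
      g σ = Real.sqrt 2 * Real.cos (σ / 2) * P.eval (Real.sqrt 2 * Real.sin (σ / 2))
          + Real.sqrt 2 * Real.sin (σ / 2) * Q.eval (Real.sqrt 2 * Real.cos (σ / 2))) :
    (∀ σ ∈ Set.Ioo (0 : ℝ) Real.pi, φ (Real.cos σ) * Real.sin σ = g σ) ∧
    ContDiff ℝ (⊤ : ℕ∞) g := by
  have hs2 : (0:ℝ) < Real.sqrt 2 := Real.sqrt_pos.mpr (by norm_num)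
  have hs2sq : Real.sqrt 2 * Real.sqrt 2 = 2 := Real.mul_self_sqrt (by norm_num)
  constructor
  · intro σ hσ
    obtain ⟨h0, hπ⟩ := hσ
    have hs : 0 < Real.sin (σ / 2) :=
      Real.sin_pos_of_pos_of_lt_pi (by linarith) (by linarith [Real.pi_pos])
    have hc : 0 < Real.cos (σ / 2) :=
      Real.cos_pos_of_mem_Ioo ⟨by linarith [Real.pi_pos], by linarith⟩
    have hsin : Real.sin σ = 2 * Real.sin (σ / 2) * Real.cos (σ / 2) := by
      have := Real.sin_two_mul (σ / 2)
      rw [show 2 * (σ / 2) = σ by ring] at this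
      linarith
    have h1m : 1 - Real.cos σ = 2 * Real.sin (σ / 2) ^ 2 := by
      have := Real.sin_sq_eq_half_sub (σ / 2)
      rw [show 2 * (σ / 2) = σ by ring] at this
      linarith
    have h1p : 1 + Real.cos σ = 2 * Real.cos (σ / 2) ^ 2 := by
      have := Real.cos_sq (σ / 2)
      rw [show 2 * (σ / 2) = σ by ring] at this
      linarith
    have hmem : Real.cos σ ∈ Set.Ioo (-1 : ℝ) 1 := by
      constructor <;> nlinarith
    have hsq1 : Real.sqrt (1 - Real.cos σ) = Real.sqrt 2 * Real.sin (σ / 2) := by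
      rw [h1m, Real.sqrt_mul (by norm_num), Real.sqrt_sq hs.le]
    have hsq2 : Real.sqrt (1 + Real.cos σ) = Real.sqrt 2 * Real.cos (σ / 2) := by
      rw [h1p, Real.sqrt_mul (by norm_num), Real.sqrt_sq hc.le]
    have hr1 : (1 - Real.cos σ) ^ (-(1/2 : ℝ)) = (Real.sqrt 2 * Real.sin (σ / 2))⁻¹ := by
      rw [Real.rpow_neg (by linarith [hmem.2]), ← Real.sqrt_eq_rpow, hsq1]
    have hr2 : (1 + Real.cos σ) ^ (-(1/2 : ℝ)) = (Real.sqrt 2 * Real.cos (σ / 2))⁻¹ := by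
      rw [Real.rpow_neg (by linarith [hmem.1]), ← Real.sqrt_eq_rpow, hsq2]
    rw [hφ _ hmem, hg, hsq1, hsq2, hr1, hr2, hsin]
    field_simp
    linear_combination (-(Polynomial.eval (Real.sqrt 2 * Real.sin (σ / 2)) P * Real.cos (σ / 2) +
        Real.sin (σ / 2) * Polynomial.eval (Real.sqrt 2 * Real.cos (σ / 2)) Q)) * hs2sq
  · have hpoly : ∀ R : Polynomial ℝ, ContDiff ℝ (⊤ : ℕ∞) fun x : ℝ => R.eval x := by
      intro R
      induction R using Polynomial.induction_on' with
      | add p q hp hq => simpa using hp.add hq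
      | monomial n a =>
        simpa [Polynomial.eval_monomial] using contDiff_const.mul (contDiff_id.pow n)
    have hP := hpoly P
    have hQ := hpoly Q
    have hhalf : ContDiff ℝ (⊤ : ℕ∞) fun σ : ℝ => σ / 2 := contDiff_id.div_const 2
    have hsin : ContDiff ℝ (⊤ : ℕ∞) fun σ : ℝ => Real.sqrt 2 * Real.sin (σ / 2) :=
      contDiff_const.mul (Real.contDiff_sin.comp hhalf)
    have hcos : ContDiff ℝ (⊤ : ℕ∞) fun σ : ℝ => Real.sqrt 2 * Real.cos (σ / 2) :=
      contDiff_const.mul (Real.contDiff_cos.comp hhalf)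
    have : g = fun σ =>
        Real.sqrt 2 * Real.cos (σ / 2) * P.eval (Real.sqrt 2 * Real.sin (σ / 2))
          + Real.sqrt 2 * Real.sin (σ / 2) * Q.eval (Real.sqrt 2 * Real.cos (σ / 2)) :=
      funext hg
    rw [this]
    exact (hcos.mul (hP.comp hsin)).add (hsin.mul (hQ.comp hcos))
end

section
/- For every real number r with |r| ≤ 1, the integral over σ from 0 to π of log|r - cos σ| dσ equals -π·log 2. -/
open Real intervalIntegral
open MeasureTheory Set

noncomputable def symmL : ℝ → ℝ := fun u => Real.log |Real.sin u|

lemma symm_log01 : IntervalIntegrable Real.log MeasureTheory.volume 0 1 := by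
  have h : IntegrableOn (fun x : ℝ => -Real.log x) (Set.Ioc (0:ℝ) 1) := by
    apply intervalIntegral.integrableOn_deriv_of_nonneg
      (g := fun x => x - x * Real.log x) (g' := fun x => -Real.log x)
    · exact (continuous_id.sub Real.continuous_mul_log).continuousOn
    · intro x hx
      have h1 := (hasDerivAt_id x).sub (Real.hasDerivAt_mul_log (ne_of_gt hx.1))
      exact h1.congr_deriv (by ring)
    · intro x hx
      simp only [neg_nonneg]
      exact Real.log_nonpos hx.1.le hx.2.le
  have h2 : IntegrableOn Real.log (Set.Ioc (0:ℝ) 1) :=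
    MeasureTheory.integrable_neg_iff.mp h
  exact (intervalIntegrable_iff_integrableOn_Ioc_of_le zero_le_one).2 h2

lemma symm_log0c : IntervalIntegrable Real.log MeasureTheory.volume 0 (π/2) := by
  refine symm_log01.trans (intervalIntegrable_log ?_)
  rw [Set.uIcc_of_le (by linarith [Real.pi_gt_three] : (1:ℝ) ≤ π/2)]
  rintro ⟨h0, -⟩
  norm_num at h0

lemma symmL_meas : Measurable symmL :=
  Real.measurable_log.comp (continuous_abs.comp Real.continuous_sin).measurable

lemma symmL_int1 : IntervalIntegrable symmL MeasureTheory.volume 0 (π/2) := by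
  have hπ : (0:ℝ) < π/2 := by positivity
  rw [intervalIntegrable_iff_integrableOn_Ioc_of_le hπ.le]
  have hg : IntegrableOn (fun x : ℝ => Real.log (π/2) - Real.log x) (Set.Ioc 0 (π/2)) := by
    have := (_root_.intervalIntegrable_const (c := Real.log (π/2))).sub symm_log0c
    rwa [intervalIntegrable_iff_integrableOn_Ioc_of_le hπ.le] at this
  refine hg.integrable.mono' (symmL_meas.aestronglyMeasurable) ?_
  refine (MeasureTheory.ae_restrict_iff' measurableSet_Ioc).2 (Filter.Eventually.of_forall ?_)
  intro u hu
  have hu0 : 0 < u := hu.1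
  have huπ : u ≤ π/2 := hu.2
  have hs : 0 < Real.sin u := Real.sin_pos_of_pos_of_lt_pi hu0 (lt_of_le_of_lt huπ (by linarith [Real.pi_pos]))
  have hb : 2/π * u ≤ Real.sin u := Real.mul_le_sin hu0.le huπ
  have h1 : ‖symmL u‖ = -Real.log (Real.sin u) := by
    rw [show symmL u = Real.log (Real.sin u) by simp [symmL, abs_of_pos hs]]
    rw [Real.norm_eq_abs, abs_of_nonpos (Real.log_nonpos hs.le (Real.sin_le_one u))]
  rw [h1]
  have h2 : Real.log (2/π * u) ≤ Real.log (Real.sin u) :=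
    Real.log_le_log (by positivity) hb
  have h3 : Real.log (2/π * u) = -Real.log (π/2) + Real.log u := by
    rw [Real.log_mul (by positivity) hu0.ne', show (2:ℝ)/π = (π/2)⁻¹ by field_simp, Real.log_inv]
  linarith

lemma symmL_per : Function.Periodic symmL π := by
  intro x; simp [symmL, Real.sin_add_pi]

lemma symmL_even : ∀ x, symmL (-x) = symmL x := by
  intro x; simp [symmL]

lemma symmL_int_big : IntervalIntegrable symmL MeasureTheory.volume (-(π/2)) (2*π) := by
  have h1 := symmL_int1
  have h2 : IntervalIntegrable symmL MeasureTheory.volume (π/2) π := by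
    have h := (h1.comp_sub_left π).symm
    have he : (fun x => symmL (π - x)) = symmL := by
      funext x; simp [symmL, Real.sin_pi_sub]
    rw [he] at h
    have e : π - π/2 = π/2 := by ring
    rwa [e, sub_zero] at h
  have h0π : IntervalIntegrable symmL MeasureTheory.volume 0 π := h1.trans h2
  have hneg : IntervalIntegrable symmL MeasureTheory.volume (-(π/2)) 0 := by
    have h := (IntervalIntegrable.iff_comp_neg (f := symmL) (a := π/2) (b := 0)).mp h1.symm
    have he : (fun x => symmL (-x)) = symmL := funext symmL_even
    rw [he] at h
    simpa using h
  have hshift : IntervalIntegrable symmL MeasureTheory.volume π (2*π) := by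
    have h := h0π.comp_sub_right π
    have he : (fun x => symmL (x - π)) = symmL := by
      funext x
      have := symmL_per (x - π)
      simp at this
      exact this.symm
    rw [he] at h
    have : π + π = 2*π := by ring
    rwa [zero_add, this] at h
  exact (hneg.trans h0π).trans hshift

lemma symmL_int (a b : ℝ) (ha : Set.uIcc a b ⊆ Set.uIcc (-(π/2)) (2*π)) :
    IntervalIntegrable symmL MeasureTheory.volume a b :=
  symmL_int_big.mono_set ha

lemma countable_sin_zero : Set.Countable {x : ℝ | Real.sin x = 0} := by
  refine (Set.countable_range (fun n : ℤ => (n:ℝ) * π)).mono ?_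
  intro x hx
  rw [Set.mem_setOf_eq, Real.sin_eq_zero_iff] at hx
  obtain ⟨n, hn⟩ := hx
  exact ⟨n, hn⟩

lemma countable_cos_zero : Set.Countable {x : ℝ | Real.cos x = 0} := by
  refine (Set.countable_range (fun n : ℤ => ((2*n+1):ℝ) * π / 2)).mono ?_
  intro x hx
  rw [Set.mem_setOf_eq, Real.cos_eq_zero_iff] at hx
  obtain ⟨n, hn⟩ := hx
  exact ⟨n, by push_cast; linarith [hn]⟩

lemma symmK_val : ∫ u in (0:ℝ)..π, symmL u = -π * Real.log 2 := by
  have hpi := Real.pi_pos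
  have hsub : Set.uIcc (0:ℝ) π ⊆ Set.uIcc (-(π/2)) (2*π) := by
    rw [Set.uIcc_of_le (by linarith : (0:ℝ) ≤ π), Set.uIcc_of_le (by linarith : -(π/2) ≤ 2*π)]
    exact Set.Icc_subset_Icc (by linarith) (by linarith)
  have h0π : IntervalIntegrable symmL MeasureTheory.volume 0 π := symmL_int _ _ hsub
  have hπ2π : IntervalIntegrable symmL MeasureTheory.volume π (2*π) := by
    refine symmL_int _ _ ?_
    rw [Set.uIcc_of_le (by linarith : π ≤ 2*π), Set.uIcc_of_le (by linarith : -(π/2) ≤ 2*π)]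
    exact Set.Icc_subset_Icc (by linarith) le_rfl
  -- ∫ π..2π = ∫ 0..π
  have hseg : ∫ u in π..(2*π), symmL u = ∫ u in (0:ℝ)..π, symmL u := by
    have := symmL_per.intervalIntegral_add_eq π 0
    simpa [two_mul] using this
  -- ∫ 0..2π = 2K
  have h02π : ∫ u in (0:ℝ)..(2*π), symmL u = 2 * ∫ u in (0:ℝ)..π, symmL u := by
    rw [← intervalIntegral.integral_add_adjacent_intervals h0π hπ2π, hseg]; ring
  -- substitution u = 2v
  have hsub2 : ∫ v in (0:ℝ)..π, symmL (2*v) = 2⁻¹ * ∫ u in (0:ℝ)..(2*π), symmL u := by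
    have := intervalIntegral.integral_comp_mul_left symmL (a := 0) (b := π) (two_ne_zero)
    simpa [smul_eq_mul] using this
  -- a.e. identity
  have hae : ∫ v in (0:ℝ)..π, symmL (2*v)
      = ∫ v in (0:ℝ)..π, (Real.log 2 + symmL v + symmL (v + π/2)) := by
    apply intervalIntegral.integral_congr_ae
    have hS : MeasureTheory.volume ({x : ℝ | Real.sin x = 0} ∪ {x : ℝ | Real.cos x = 0}) = 0 :=
      (countable_sin_zero.union countable_cos_zero).measure_zero _
    filter_upwards [(MeasureTheory.measure_eq_zero_iff_ae_notMem).mp hS] with v hv _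
    rw [Set.mem_union, not_or, Set.mem_setOf_eq, Set.mem_setOf_eq] at hv
    obtain ⟨hs, hc⟩ := hv
    have habs : |Real.sin (2*v)| = 2 * |Real.sin v| * |Real.cos v| := by
      rw [Real.sin_two_mul, abs_mul, abs_mul]
      norm_num
    simp only [symmL]
    rw [habs, Real.log_mul (by positivity) (abs_ne_zero.2 hc),
        Real.log_mul two_ne_zero (abs_ne_zero.2 hs), Real.sin_add_pi_div_two]
  -- compute RHS
  have hint3 : IntervalIntegrable (fun v => symmL (v + π/2)) MeasureTheory.volume 0 π := by
    have h := (symmL_int (π/2) (3*π/2) (by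
      rw [Set.uIcc_of_le (by linarith : π/2 ≤ 3*π/2), Set.uIcc_of_le (by linarith : -(π/2) ≤ 2*π)]
      exact Set.Icc_subset_Icc (by linarith) (by linarith))).comp_add_right (π/2)
    have e1 : π/2 - π/2 = (0:ℝ) := by ring
    have e2 : 3*π/2 - π/2 = π := by ring
    rwa [e1, e2] at h
  have hval3 : ∫ v in (0:ℝ)..π, symmL (v + π/2) = ∫ u in (0:ℝ)..π, symmL u := by
    rw [intervalIntegral.integral_comp_add_right symmL (π/2)]
    have := symmL_per.intervalIntegral_add_eq (π/2) 0
    simpa [show π + π/2 = π/2 + π by ring] using this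
  have hsplit : ∫ v in (0:ℝ)..π, (Real.log 2 + symmL v + symmL (v + π/2))
      = π * Real.log 2 + (∫ u in (0:ℝ)..π, symmL u) + ∫ u in (0:ℝ)..π, symmL u := by
    rw [intervalIntegral.integral_add (((_root_.intervalIntegrable_const).add h0π)) hint3,
        intervalIntegral.integral_add (_root_.intervalIntegrable_const) h0π, hval3]
    simp [smul_eq_mul, mul_comm]
  have := hae
  rw [hsub2, h02π, hsplit] at this
  linarith

lemma countable_sin_half (θ : ℝ) : Set.Countable {x : ℝ | Real.sin ((x + θ)/2) = 0} := by
  refine (Set.countable_range (fun n : ℤ => 2*(n:ℝ)*π - θ)).mono ?_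
  intro x hx
  rw [Set.mem_setOf_eq, Real.sin_eq_zero_iff] at hx
  obtain ⟨n, hn⟩ := hx
  exact ⟨n, by simp only []; nlinarith [hn]⟩

/-- The n = 0 closed-form logarithmic integral diagonalizing Symm's operator
(equation (5.21) of the paper): for `|r| ≤ 1`,
`∫_0^π log |r - cos σ| dσ = -π log 2`. -/
theorem integral_log_abs_sub_cos (r : ℝ) (hr : |r| ≤ 1) :
    ∫ σ in (0 : ℝ)..Real.pi, Real.log |r - Real.cos σ| = -Real.pi * Real.log 2 := by
  have hpi := Real.pi_pos
  obtain ⟨hr1, hr2⟩ := abs_le.mp hr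
  set θ := Real.arccos r with hθdef
  have hθ0 : 0 ≤ θ := Real.arccos_nonneg r
  have hθπ : θ ≤ π := Real.arccos_le_pi r
  have hcos : Real.cos θ = r := Real.cos_arccos hr1 hr2
  -- a.e. pointwise identity
  have hae : ∫ σ in (0:ℝ)..π, Real.log |r - Real.cos σ|
      = ∫ σ in (0:ℝ)..π, (Real.log 2 + symmL ((σ + θ)/2) + symmL ((σ - θ)/2)) := by
    apply intervalIntegral.integral_congr_ae
    have hS : MeasureTheory.volume
        ({x : ℝ | Real.sin ((x + θ)/2) = 0} ∪ {x : ℝ | Real.sin ((x + -θ)/2) = 0}) = 0 :=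
      ((countable_sin_half θ).union (countable_sin_half (-θ))).measure_zero _
    filter_upwards [(MeasureTheory.measure_eq_zero_iff_ae_notMem).mp hS] with σ hv _
    rw [Set.mem_union, not_or, Set.mem_setOf_eq, Set.mem_setOf_eq] at hv
    obtain ⟨h1, h2⟩ := hv
    rw [show σ + -θ = σ - θ by ring] at h2
    have hid : r - Real.cos σ = 2 * Real.sin ((σ + θ)/2) * Real.sin ((σ - θ)/2) := by
      rw [← hcos, Real.cos_sub_cos]
      rw [show (θ + σ)/2 = (σ + θ)/2 by ring, show (θ - σ)/2 = -((σ - θ)/2) by ring,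
        Real.sin_neg]
      ring
    rw [hid, abs_mul, abs_mul]
    rw [Real.log_mul (by positivity) (abs_ne_zero.2 h2),
        Real.log_mul (by norm_num) (abs_ne_zero.2 h1)]
    norm_num [symmL]
  rw [hae]
  -- integrability of the pieces
  have hint1 : IntervalIntegrable (fun σ => symmL ((σ + θ)/2)) MeasureTheory.volume 0 π := by
    have hbase : IntervalIntegrable symmL MeasureTheory.volume (θ/2) ((π+θ)/2) := by
      refine symmL_int _ _ ?_
      rw [Set.uIcc_of_le (by linarith : θ/2 ≤ (π+θ)/2),
          Set.uIcc_of_le (by linarith : -(π/2) ≤ 2*π)]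
      exact Set.Icc_subset_Icc (by linarith) (by linarith)
    have h := (hbase.comp_mul_right (c := 1/2)).comp_add_right θ
    have e1 : θ/2 / (1/2) - θ = (0:ℝ) := by field_simp; ring
    have e2 : (π+θ)/2 / (1/2) - θ = π := by field_simp; ring
    rw [e1, e2] at h
    have he : (fun x => symmL ((x + θ) * (1/2))) = (fun σ => symmL ((σ + θ)/2)) := by
      funext x; rw [mul_one_div]
    rwa [he] at h
  have hint2 : IntervalIntegrable (fun σ => symmL ((σ - θ)/2)) MeasureTheory.volume 0 π := by
    have hbase : IntervalIntegrable symmL MeasureTheory.volume (-θ/2) ((π-θ)/2) := by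
      refine symmL_int _ _ ?_
      rw [Set.uIcc_of_le (by linarith : -θ/2 ≤ (π-θ)/2),
          Set.uIcc_of_le (by linarith : -(π/2) ≤ 2*π)]
      exact Set.Icc_subset_Icc (by linarith) (by linarith)
    have h := (hbase.comp_mul_right (c := 1/2)).comp_sub_right θ
    have e1 : -θ/2 / (1/2) + θ = (0:ℝ) := by field_simp; ring
    have e2 : (π-θ)/2 / (1/2) + θ = π := by field_simp; ring
    rw [e1, e2] at h
    have he : (fun x => symmL ((x - θ) * (1/2))) = (fun σ => symmL ((σ - θ)/2)) := by
      funext x; rw [mul_one_div]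
    rwa [he] at h
  -- split
  rw [intervalIntegral.integral_add ((_root_.intervalIntegrable_const).add hint1) hint2,
      intervalIntegral.integral_add (_root_.intervalIntegrable_const) hint1]
  -- values of A and B
  have hA : ∫ σ in (0:ℝ)..π, symmL ((σ + θ)/2) = 2 * ∫ u in (θ/2)..(θ/2 + π/2), symmL u := by
    have he : (fun σ : ℝ => symmL ((σ + θ)/2)) = (fun σ => symmL (σ/2 + θ/2)) := by
      funext x; rw [add_div]
    rw [he, intervalIntegral.integral_comp_div_add symmL two_ne_zero (θ/2),
        show (0:ℝ)/2 + θ/2 = θ/2 by ring, show π/2 + θ/2 = θ/2 + π/2 by ring]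
    norm_num [smul_eq_mul]
  have hB : ∫ σ in (0:ℝ)..π, symmL ((σ - θ)/2) = 2 * ∫ u in (θ/2 - π/2)..(θ/2), symmL u := by
    have he : (fun σ : ℝ => symmL ((σ - θ)/2)) = (fun σ => symmL (σ/2 + (-θ/2))) := by
      funext x; rw [sub_div]; ring_nf
    rw [he, intervalIntegral.integral_comp_div_add symmL two_ne_zero (-θ/2)]
    have hflip : ∫ u in (0/2 + -θ/2)..(π/2 + -θ/2), symmL u
        = ∫ u in (θ/2 - π/2)..(θ/2), symmL u := by
      have h := intervalIntegral.integral_comp_neg (a := θ/2 - π/2) (b := θ/2) symmL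
      have he2 : (fun x => symmL (-x)) = symmL := funext symmL_even
      rw [he2] at h
      rw [h]
      congr 1 <;> ring
    rw [hflip]
    norm_num [smul_eq_mul]
  rw [hA, hB]
  -- combine adjacent intervals and use periodicity
  have hadj : (∫ u in (θ/2 - π/2)..(θ/2), symmL u) + (∫ u in (θ/2)..(θ/2 + π/2), symmL u)
      = ∫ u in (θ/2 - π/2)..(θ/2 + π/2), symmL u := by
    apply intervalIntegral.integral_add_adjacent_intervals <;>
    · refine symmL_int _ _ ?_
      rw [Set.uIcc_of_le (by linarith), Set.uIcc_of_le (by linarith : -(π/2) ≤ 2*π)]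
      exact Set.Icc_subset_Icc (by linarith) (by linarith)
  have hper : ∫ u in (θ/2 - π/2)..(θ/2 + π/2), symmL u = -π * Real.log 2 := by
    have h := symmL_per.intervalIntegral_add_eq (θ/2 - π/2) 0
    rw [show θ/2 - π/2 + π = θ/2 + π/2 by ring, zero_add] at h
    rw [h, symmK_val]
  have hconst : ∫ _ in (0:ℝ)..π, Real.log 2 = π * Real.log 2 := by
    simp [smul_eq_mul]
  rw [hconst]
  have : (2 * ∫ u in (θ/2 - π/2)..(θ/2), symmL u) + (2 * ∫ u in (θ/2)..(θ/2 + π/2), symmL u)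
      = 2 * (-π * Real.log 2) := by
    rw [← mul_add, hadj, hper]
  linarith [this]
end

section
/- Let p ≥ 2 be an integer, let v : ℝ → ℝ be defined by v(σ) = (1/p - 1/2)·((π - σ)/π)³ + (1/p)·(σ - π)/π + 1/2, and define w : [0,2π] → ℝ by w(σ) = v(σ)^p / (v(σ)^p + v(2π - σ)^p). Then the denominator v(σ)^p + v(2π - σ)^p is strictly positive for every σ ∈ [0,2π]; w(0) = 0 and w(2π) = 1; w is infinitely differentiable (C^∞) on [0,2π]; and w is strictly increasing on [0,2π]. -/
open Real Set

/-- The normalized polynomial change of variables `w` of equation (5.25) of the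
paper: its denominator `v(σ)^p + v(2π - σ)^p` is strictly positive on `[0, 2π]`,
`w 0 = 0`, `w (2π) = 1`, `w` is `C^∞` on `[0, 2π]`, and `w` is strictly
increasing on `[0, 2π]`. -/
theorem graded_mesh_change_of_variables_properties
    (p : ℕ) (hp : 2 ≤ p) (v w : ℝ → ℝ)
    (hv : ∀ σ : ℝ,
      v σ = (1 / (p : ℝ) - 1 / 2) * ((Real.pi - σ) / Real.pi) ^ 3
          + (1 / (p : ℝ)) * (σ - Real.pi) / Real.pi + 1 / 2)
    (hw : ∀ σ : ℝ,
      w σ = v σ ^ p / (v σ ^ p + v (2 * Real.pi - σ) ^ p)) :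
    (∀ σ ∈ Set.Icc (0 : ℝ) (2 * Real.pi),
        0 < v σ ^ p + v (2 * Real.pi - σ) ^ p) ∧
    w 0 = 0 ∧ w (2 * Real.pi) = 1 ∧
    ContDiffOn ℝ (⊤ : ℕ∞) w (Set.Icc (0 : ℝ) (2 * Real.pi)) ∧
    StrictMonoOn w (Set.Icc (0 : ℝ) (2 * Real.pi)) := by
  have hπ : (0:ℝ) < Real.pi := Real.pi_pos
  have hπ' : Real.pi ≠ 0 := ne_of_gt hπ
  have hq : (2:ℝ) ≤ (p:ℝ) := by exact_mod_cast hp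
  have hq0 : (0:ℝ) < (p:ℝ) := by linarith
  have hq0' : (p:ℝ) ≠ 0 := ne_of_gt hq0
  have hp0 : p ≠ 0 := by omega
  have hv0 : v 0 = 0 := by rw [hv]; field_simp; ring
  have hv2π : v (2 * Real.pi) = 1 := by rw [hv]; field_simp; ring
  have hsym : ∀ σ, v (2 * Real.pi - σ) = 1 - v σ := by
    intro σ; rw [hv, hv]; field_simp; ring
  have hinv : 1/(p:ℝ) ≤ 1/2 := one_div_le_one_div_of_le two_pos hq
  have hmono : StrictMono v := by
    intro x y hxy
    set a := (Real.pi - x)/Real.pi with ha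
    set b := (Real.pi - y)/Real.pi with hb
    have hab : b < a := by
      rw [ha, hb]
      exact div_lt_div_of_pos_right (by linarith) hπ
    have h1 : 0 ≤ a^2 + a*b + b^2 := by
      nlinarith [sq_nonneg (a+b), sq_nonneg a, sq_nonneg b]
    have hd : 0 ≤ a^3 - b^3 := by
      nlinarith [mul_nonneg (sub_nonneg.mpr hab.le) h1]
    have h3 : 0 ≤ (1/(p:ℝ)-1/2)*(b^3-a^3) := by
      nlinarith [mul_nonneg (by linarith : (0:ℝ) ≤ 1/2 - 1/(p:ℝ)) hd]
    have e : v y - v x = (1/(p:ℝ)-1/2)*(b^3 - a^3) + (1/(p:ℝ))*(a - b) := by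
      rw [hv, hv, ha, hb]; field_simp; ring
    have hpos : 0 < (1/(p:ℝ))*(a-b) :=
      mul_pos (by positivity) (by linarith)
    linarith [e, h3, hpos]
  have hvnonneg : ∀ σ ∈ Set.Icc (0:ℝ) (2*Real.pi), 0 ≤ v σ := by
    intro σ hσ
    have := hmono.monotone hσ.1
    rwa [hv0] at this
  have hvle1 : ∀ σ ∈ Set.Icc (0:ℝ) (2*Real.pi), v σ ≤ 1 := by
    intro σ hσ
    have := hmono.monotone hσ.2
    rwa [hv2π] at this
  have hden' : ∀ σ ∈ Set.Icc (0:ℝ) (2*Real.pi), 0 < v σ ^ p + (1 - v σ) ^ p := by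
    intro σ hσ
    rcases eq_or_lt_of_le (hvnonneg σ hσ) with h | h
    · rw [← h]
      simp [zero_pow hp0]
    · have h2 : (0:ℝ) ≤ (1 - v σ) ^ p :=
        pow_nonneg (by linarith [hvle1 σ hσ]) p
      have := pow_pos h p
      linarith
  have hden : ∀ σ ∈ Set.Icc (0:ℝ) (2*Real.pi),
      0 < v σ ^ p + v (2 * Real.pi - σ) ^ p := by
    intro σ hσ; rw [hsym]; exact hden' σ hσ
  refine ⟨hden, ?_, ?_, ?_, ?_⟩
  · rw [hw]
    simp [hv0, hv2π, zero_pow hp0]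
  · rw [hw]
    simp [hv0, hv2π, zero_pow hp0]
  · have hvc : ContDiff ℝ (⊤ : ℕ∞) v := by
      have hvfun : v = fun σ => (1 / (p : ℝ) - 1 / 2) * ((Real.pi - σ) / Real.pi) ^ 3
          + (1 / (p : ℝ)) * (σ - Real.pi) / Real.pi + 1 / 2 := funext hv
      rw [hvfun]
      apply ContDiff.add
      apply ContDiff.add
      · exact contDiff_const.mul (((contDiff_const.sub contDiff_id).div_const _).pow 3)
      · exact (contDiff_const.mul (contDiff_id.sub contDiff_const)).div_const _
      · exact contDiff_const
    have hwfun : w = fun σ => v σ ^ p / (v σ ^ p + v (2 * Real.pi - σ) ^ p) :=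
      funext hw
    rw [hwfun]
    apply ContDiffOn.div
    · exact (hvc.pow p).contDiffOn
    · exact ((hvc.pow p).add
        ((hvc.comp (contDiff_const.sub contDiff_id)).pow p)).contDiffOn
    · intro x hx; exact ne_of_gt (hden x hx)
  · intro x hx y hy hxy
    have hx0 : 0 ≤ v x := hvnonneg x hx
    have hy0 : 0 ≤ v y := hvnonneg y hy
    have hx1 : v x ≤ 1 := hvle1 x hx
    have hy1 : v y ≤ 1 := hvle1 y hy
    have hvxy : v x < v y := hmono hxy
    have dx : 0 < v x ^ p + (1 - v x) ^ p := hden' x hx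
    have dy : 0 < v y ^ p + (1 - v y) ^ p := hden' y hy
    rw [hw x, hw y, hsym, hsym, div_lt_div_iff₀ dx dy]
    have hbase : v x * (1 - v y) < v y * (1 - v x) := by nlinarith
    have key : (v x * (1 - v y)) ^ p < (v y * (1 - v x)) ^ p :=
      pow_lt_pow_left₀ hbase (mul_nonneg hx0 (by linarith)) hp0
    rw [mul_pow, mul_pow] at key
    rw [mul_add, mul_add]
    linarith [key, mul_comm (v x ^ p) (v y ^ p)]
end

section
/- Let p ≥ 2 be an integer, let v : ℝ → ℝ be defined by v(σ) = (1/p - 1/2)·((π - σ)/π)³ + (1/p)·(σ - π)/π + 1/2, and let w(σ) = v(σ)^p / (v(σ)^p + v(2π - σ)^p), which is well-defined and infinitely differentiable in a neighbourhood of σ = 0 and of σ = 2π. Then for every integer k with 1 ≤ k ≤ p - 1, the k-th derivative of w vanishes at both endpoints: w^{(k)}(0) = 0 and w^{(k)}(2π) = 0. -/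
open Real Set
open scoped ContDiff

lemma step_lemma (F G : ℝ → ℝ) (U : Set ℝ) (hU : IsOpen U)
    (hG : ContDiffOn ℝ ∞ G U) (c a : ℝ) (m : ℕ) (hm : 1 ≤ m)
    (hF : ∀ x ∈ U, F x = c + (x - a) ^ m * G x) :
    ∃ G' : ℝ → ℝ, ContDiffOn ℝ ∞ G' U ∧
      ∀ x ∈ U, deriv F x = (x - a) ^ (m - 1) * G' x := by
  refine ⟨fun x => (m : ℝ) * G x + (x - a) * deriv G x, ?_, ?_⟩
  · have hG' : ContDiffOn ℝ ∞ (deriv G) U := hG.deriv_of_isOpen hU (by simp)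
    exact (contDiffOn_const.mul hG).add
      (((contDiffOn_id.sub contDiffOn_const)).mul hG')
  · intro x hx
    have hGd : DifferentiableAt ℝ G x :=
      (hG.differentiableOn (by simp)).differentiableAt (hU.mem_nhds hx)
    have heq : F =ᶠ[nhds x] fun y => c + (y - a) ^ m * G y :=
      Filter.eventuallyEq_of_mem (hU.mem_nhds hx) hF
    have h1 : HasDerivAt (fun y : ℝ => (y - a) ^ m)
        ((m : ℝ) * (x - a) ^ (m - 1) * 1) x :=
      ((hasDerivAt_id x).sub_const a).pow m
    have h2 : HasDerivAt (fun y => c + (y - a) ^ m * G y)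
        (0 + (((m : ℝ) * (x - a) ^ (m - 1) * 1) * G x
          + (x - a) ^ m * deriv G x)) x :=
      (hasDerivAt_const x c).add (h1.mul hGd.hasDerivAt)
    rw [heq.deriv_eq, h2.deriv]
    have hpow : (x - a) ^ m = (x - a) ^ (m - 1) * (x - a) := by
      rw [← pow_succ]; congr 1; omega
    rw [hpow]; ring

lemma key_lemma (f g : ℝ → ℝ) (U : Set ℝ) (hU : IsOpen U) (a : ℝ) (ha : a ∈ U)
    (hg : ContDiffOn ℝ ∞ g U) (c : ℝ) (p : ℕ)
    (hf : ∀ x ∈ U, f x = c + (x - a) ^ p * g x)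
    (k : ℕ) (hk1 : 1 ≤ k) (hk2 : k ≤ p - 1) :
    iteratedDeriv k f a = 0 := by
  have hp2 : 2 ≤ p := by omega
  have main : ∀ k : ℕ, 1 ≤ k → k ≤ p - 1 → ∃ G : ℝ → ℝ, ContDiffOn ℝ ∞ G U ∧
      ∀ x ∈ U, iteratedDeriv k f x = (x - a) ^ (p - k) * G x := by
    intro k
    induction k with
    | zero => omega
    | succ n ih =>
      intro _ hk
      rcases Nat.eq_zero_or_pos n with h0 | hn
      · subst h0
        obtain ⟨G', hG', hder⟩ := step_lemma f g U hU hg c a p (by omega) hf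
        exact ⟨G', hG', fun x hx => by rw [iteratedDeriv_one]; exact hder x hx⟩
      · obtain ⟨G, hG, hfx⟩ := ih hn (by omega)
        obtain ⟨G', hG', hder⟩ := step_lemma (iteratedDeriv n f) G U hU hG 0 a
          (p - n) (by omega) (fun x hx => by rw [hfx x hx]; ring)
        refine ⟨G', hG', fun x hx => ?_⟩
        rw [iteratedDeriv_succ, hder x hx,
          show p - n - 1 = p - (n + 1) from by omega]
  obtain ⟨G, _, hfx⟩ := main k hk1 hk2
  rw [hfx a ha, sub_self, zero_pow (by omega), zero_mul]

/-- Derivative-vanishing property of the polynomial change of variables of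
equation (5.25) of the paper: for every integer `k` with `1 ≤ k ≤ p - 1`, the
`k`-th derivative of `w` vanishes at both endpoints `0` and `2π`. -/
theorem graded_mesh_change_of_variables_deriv_vanish
    (p : ℕ) (hp : 2 ≤ p) (v w : ℝ → ℝ)
    (hv : ∀ σ : ℝ,
      v σ = (1 / (p : ℝ) - 1 / 2) * ((Real.pi - σ) / Real.pi) ^ 3
          + (1 / (p : ℝ)) * (σ - Real.pi) / Real.pi + 1 / 2)
    (hw : ∀ σ : ℝ,
      w σ = v σ ^ p / (v σ ^ p + v (2 * Real.pi - σ) ^ p))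
    (k : ℕ) (hk1 : 1 ≤ k) (hk2 : k ≤ p - 1) :
    iteratedDeriv k w 0 = 0 ∧ iteratedDeriv k w (2 * Real.pi) = 0 := by
  have hπ : (Real.pi : ℝ) ≠ 0 := Real.pi_ne_zero
  have hpR : (p : ℝ) ≠ 0 := by positivity
  set A : ℝ := 1 / (p : ℝ) - 1 / 2 with hA
  set q : ℝ → ℝ := fun σ =>
    (1 / (p : ℝ) - 3 * A) / Real.pi + (3 * A / Real.pi ^ 2) * σ
      - (A / Real.pi ^ 3) * σ ^ 2 with hq
  have hvq : ∀ σ : ℝ, v σ = σ * q σ := by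
    intro σ
    rw [hv, hq, hA]
    field_simp
    ring
  have hqCD : ContDiff ℝ ∞ q := by
    rw [hq]
    exact contDiff_const.add ((contDiff_const.mul contDiff_id)) |>.sub
      (contDiff_const.mul (contDiff_id.pow 2))
  have hvCD : ContDiff ℝ ∞ v := by
    have : v = fun σ => σ * q σ := funext hvq
    rw [this]
    exact contDiff_id.mul hqCD
  set D : ℝ → ℝ := fun σ => v σ ^ p + v (2 * Real.pi - σ) ^ p with hD
  have hDCD : ContDiff ℝ ∞ D :=
    (hvCD.pow p).add ((hvCD.comp (contDiff_const.sub contDiff_id)).pow p)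
  set U : Set ℝ := {x | D x ≠ 0} with hUdef
  have hUopen : IsOpen U := isOpen_ne_fun hDCD.continuous continuous_const
  have hv0 : v 0 = 0 := by rw [hvq]; ring
  have hv2π : v (2 * Real.pi) = 1 := by
    rw [hv]
    field_simp
    linear_combination (-2) * mul_inv_cancel₀ hpR
  have hD0 : D 0 = 1 := by
    simp only [hD, sub_zero, hv0, hv2π, one_pow, zero_pow (by omega : p ≠ 0)]
    ring
  have hD2π : D (2 * Real.pi) = 1 := by
    simp only [hD, sub_self, hv0, hv2π, one_pow, zero_pow (by omega : p ≠ 0)]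
    ring
  have h0U : (0 : ℝ) ∈ U := by simp [hUdef, hD0]
  have h2πU : (2 * Real.pi) ∈ U := by simp [hUdef, hD2π]
  constructor
  · -- at 0
    refine key_lemma w (fun x => q x ^ p / D x) U hUopen 0 h0U
      ((hqCD.pow p).contDiffOn.div hDCD.contDiffOn (fun x hx => hx)) 0 p
      ?_ k hk1 hk2
    intro x hx
    have hDx : D x ≠ 0 := hx
    have hDeq : v x ^ p + v (2 * Real.pi - x) ^ p = D x := rfl
    have hnum : v x ^ p = x ^ p * q x ^ p := by rw [hvq x, mul_pow]
    rw [hw, hDeq, hnum, sub_zero, zero_add, mul_div_assoc]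
  · -- at 2π
    refine key_lemma w (fun x => -(-1 : ℝ) ^ p * q (2 * Real.pi - x) ^ p / D x)
      U hUopen (2 * Real.pi) h2πU
      ?_ 1 p ?_ k hk1 hk2
    · exact ((contDiff_const.mul ((hqCD.comp
        (contDiff_const.sub contDiff_id)).pow p)).contDiffOn).div
        hDCD.contDiffOn (fun x hx => hx)
    · intro x hx
      have hDx : D x ≠ 0 := hx
      have hDeq : v x ^ p + v (2 * Real.pi - x) ^ p = D x := rfl
      have hsplit : v (2 * Real.pi - x) ^ p
          = (-1 : ℝ) ^ p * (x - 2 * Real.pi) ^ p * q (2 * Real.pi - x) ^ p := by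
        rw [hvq (2 * Real.pi - x),
          show (2 * Real.pi - x) = (-1) * (x - 2 * Real.pi) by ring,
          mul_pow, mul_pow]
      have hvx : v x ^ p = D x - v (2 * Real.pi - x) ^ p := by
        rw [hD]; ring
      rw [hw, hDeq, hvx, hsplit]
      field_simp
      ring
end

section
/- Let k and ℓ be natural numbers with k ≠ ℓ, set a = (2k+1)/2, b = (2ℓ+1)/2, λ = ((2k+1)² + (2ℓ+1)²)·π²/4, and define u : ℝ² → ℝ by u(x,y) = sin(aπx)·cos(bπy) - (-1)^{k+ℓ}·sin(bπx)·cos(aπy). Then: (i) u_{xx} + u_{yy} = -λ·u at every point of ℝ²; (ii) u(0,y) = 0 for every y (Dirichlet condition on the leg x = 0); (iii) u(x, 1-x) = 0 for every x (Dirichlet condition on the hypotenuse x + y = 1); (iv) ∂u/∂y(x,0) = 0 for every x (Neumann condition on the leg y = 0); and (v) u is not identically zero. -/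
open Real Set

lemma zt_hasDerivAt_sin_mul (c x : ℝ) :
    HasDerivAt (fun t => Real.sin (c * t)) (c * Real.cos (c * x)) x := by
  have h := (Real.hasDerivAt_sin (c * x)).comp x ((hasDerivAt_id x).const_mul c)
  simpa [Function.comp_def, mul_comm] using h

lemma zt_hasDerivAt_cos_mul (c x : ℝ) :
    HasDerivAt (fun t => Real.cos (c * t)) (-(c * Real.sin (c * x))) x := by
  have h := (Real.hasDerivAt_cos (c * x)).comp x ((hasDerivAt_id x).const_mul c)
  simpa [Function.comp_def, mul_comm] using h

lemma zt_iter2_sin (A B C P Q x : ℝ) :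
    iteratedDeriv 2 (fun t => Real.sin (A * t) * P - C * Real.sin (B * t) * Q) x
      = -(A ^ 2 * (Real.sin (A * x) * P)) + C * (B ^ 2 * (Real.sin (B * x) * Q)) := by
  have h1 : ∀ t : ℝ, HasDerivAt (fun s => Real.sin (A * s) * P - C * Real.sin (B * s) * Q)
      (A * Real.cos (A * t) * P - C * (B * Real.cos (B * t)) * Q) t := fun t =>
    ((zt_hasDerivAt_sin_mul A t).mul_const P).sub
      (((zt_hasDerivAt_sin_mul B t).const_mul C).mul_const Q)
  have hd : deriv (fun s => Real.sin (A * s) * P - C * Real.sin (B * s) * Q)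
      = fun t => A * Real.cos (A * t) * P - C * (B * Real.cos (B * t)) * Q :=
    funext fun t => (h1 t).deriv
  rw [iteratedDeriv_succ, iteratedDeriv_one, hd]
  have h2 : HasDerivAt (fun t => A * Real.cos (A * t) * P - C * (B * Real.cos (B * t)) * Q)
      (A * (-(A * Real.sin (A * x))) * P - C * (B * (-(B * Real.sin (B * x)))) * Q) x :=
    (((zt_hasDerivAt_cos_mul A x).const_mul A).mul_const P).sub
      ((((zt_hasDerivAt_cos_mul B x).const_mul B).const_mul C).mul_const Q)
  rw [h2.deriv]; ring

lemma zt_iter2_cos (A B P D x : ℝ) :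
    iteratedDeriv 2 (fun t => P * Real.cos (B * t) - D * Real.cos (A * t)) x
      = -(B ^ 2 * (P * Real.cos (B * x))) + A ^ 2 * (D * Real.cos (A * x)) := by
  have h1 : ∀ t : ℝ, HasDerivAt (fun s => P * Real.cos (B * s) - D * Real.cos (A * s))
      (P * (-(B * Real.sin (B * t))) - D * (-(A * Real.sin (A * t)))) t := fun t =>
    ((zt_hasDerivAt_cos_mul B t).const_mul P).sub ((zt_hasDerivAt_cos_mul A t).const_mul D)
  have hd : deriv (fun s => P * Real.cos (B * s) - D * Real.cos (A * s))
      = fun t => P * (-(B * Real.sin (B * t))) - D * (-(A * Real.sin (A * t))) :=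
    funext fun t => (h1 t).deriv
  rw [iteratedDeriv_succ, iteratedDeriv_one, hd]
  have h2 : HasDerivAt
      (fun t => P * (-(B * Real.sin (B * t))) - D * (-(A * Real.sin (A * t))))
      (P * (-(B * (B * Real.cos (B * x)))) - D * (-(A * (A * Real.cos (A * x))))) x := by
    have hB : HasDerivAt (fun t => P * (-(B * Real.sin (B * t))))
        (P * (-(B * (B * Real.cos (B * x))))) x := by
      have := ((zt_hasDerivAt_sin_mul B x).const_mul B).neg.const_mul P
      simpa using this
    have hA : HasDerivAt (fun t => D * (-(A * Real.sin (A * t))))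
        (D * (-(A * (A * Real.cos (A * x))))) x := by
      have := ((zt_hasDerivAt_sin_mul A x).const_mul A).neg.const_mul D
      simpa using this
    exact hB.sub hA
  rw [h2.deriv]; ring

/-- Closed-form family of Zaremba eigenpairs for the isosceles right triangle
(Section 7.1 of the paper): with `a = (2k+1)/2`, `b = (2ℓ+1)/2`, `k ≠ ℓ`,
`λ = ((2k+1)² + (2ℓ+1)²) π²/4` and
`u(x,y) = sin(aπx) cos(bπy) - (-1)^{k+ℓ} sin(bπx) cos(aπy)`, the function `u`
satisfies `u_{xx} + u_{yy} = -λ u` on `ℝ²`, vanishes on the leg `x = 0` and on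
the hypotenuse `x + y = 1`, has vanishing `y`-derivative on the leg `y = 0`,
and is not identically zero. -/
theorem zaremba_triangle_eigenpairs
    (k ℓ : ℕ) (hkl : k ≠ ℓ) (a b lam : ℝ)
    (ha : a = (2 * (k : ℝ) + 1) / 2) (hb : b = (2 * (ℓ : ℝ) + 1) / 2)
    (hlam : lam = ((2 * (k : ℝ) + 1) ^ 2 + (2 * (ℓ : ℝ) + 1) ^ 2) * Real.pi ^ 2 / 4)
    (u : ℝ → ℝ → ℝ)
    (hu : ∀ x y : ℝ,
      u x y = Real.sin (a * Real.pi * x) * Real.cos (b * Real.pi * y)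
        - (-1 : ℝ) ^ (k + ℓ) * Real.sin (b * Real.pi * x) * Real.cos (a * Real.pi * y)) :
    (∀ x y : ℝ,
        iteratedDeriv 2 (fun t => u t y) x + iteratedDeriv 2 (fun t => u x t) y
          = -lam * u x y) ∧
    (∀ y : ℝ, u 0 y = 0) ∧
    (∀ x : ℝ, u x (1 - x) = 0) ∧
    (∀ x : ℝ, deriv (fun t => u x t) 0 = 0) ∧
    (∃ x y : ℝ, u x y ≠ 0) := by
  set C : ℝ := (-1 : ℝ) ^ (k + ℓ) with hC
  refine ⟨?_, ?_, ?_, ?_, ?_⟩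
  · -- eigenvalue equation
    intro x y
    have hx : (fun t => u t y)
        = fun t => Real.sin (a * Real.pi * t) * Real.cos (b * Real.pi * y)
            - C * Real.sin (b * Real.pi * t) * Real.cos (a * Real.pi * y) :=
      funext fun t => hu t y
    have hy : (fun t => u x t)
        = fun t => Real.sin (a * Real.pi * x) * Real.cos (b * Real.pi * t)
            - C * Real.sin (b * Real.pi * x) * Real.cos (a * Real.pi * t) :=
      funext fun t => hu x t
    rw [hx, hy, zt_iter2_sin (a * Real.pi) (b * Real.pi) C
        (Real.cos (b * Real.pi * y)) (Real.cos (a * Real.pi * y)) x,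
      zt_iter2_cos (a * Real.pi) (b * Real.pi) (Real.sin (a * Real.pi * x))
        (C * Real.sin (b * Real.pi * x)) y,
      hu x y, ha, hb, hlam]
    ring
  · intro y; rw [hu]; simp
  · intro x
    have hbb : Real.cos (b * Real.pi * (1 - x)) = (-1 : ℝ) ^ ℓ * Real.sin (b * Real.pi * x) := by
      have h1 : b * Real.pi * (1 - x) = (ℓ : ℝ) * Real.pi - (b * Real.pi * x - Real.pi / 2) := by
        rw [hb]; ring
      rw [h1, Real.cos_nat_mul_pi_sub, Real.cos_sub_pi_div_two]
    have haa : Real.cos (a * Real.pi * (1 - x)) = (-1 : ℝ) ^ k * Real.sin (a * Real.pi * x) := by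
      have h1 : a * Real.pi * (1 - x) = (k : ℝ) * Real.pi - (a * Real.pi * x - Real.pi / 2) := by
        rw [ha]; ring
      rw [h1, Real.cos_nat_mul_pi_sub, Real.cos_sub_pi_div_two]
    rw [hu, hbb, haa]
    have hCk : C * (-1 : ℝ) ^ k = (-1 : ℝ) ^ ℓ := by
      rw [hC, ← pow_add]
      have h2 : k + ℓ + k = 2 * k + ℓ := by ring
      rw [h2, pow_add, pow_mul]
      norm_num
    linear_combination (-(Real.sin (a * Real.pi * x) * Real.sin (b * Real.pi * x))) * hCk
  · intro x
    have hy : (fun t => u x t)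
        = fun t => Real.sin (a * Real.pi * x) * Real.cos (b * Real.pi * t)
            - C * Real.sin (b * Real.pi * x) * Real.cos (a * Real.pi * t) :=
      funext fun t => hu x t
    have hder : HasDerivAt (fun t => Real.sin (a * Real.pi * x) * Real.cos (b * Real.pi * t)
            - C * Real.sin (b * Real.pi * x) * Real.cos (a * Real.pi * t))
        (Real.sin (a * Real.pi * x) * (-(b * Real.pi * Real.sin (b * Real.pi * 0)))
          - C * Real.sin (b * Real.pi * x) * (-(a * Real.pi * Real.sin (a * Real.pi * 0)))) 0 :=
      ((zt_hasDerivAt_cos_mul (b * Real.pi) 0).const_mul (Real.sin (a * Real.pi * x))).sub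
        ((zt_hasDerivAt_cos_mul (a * Real.pi) 0).const_mul (C * Real.sin (b * Real.pi * x)))
    rw [hy, hder.deriv]
    simp
  · by_contra h
    push_neg at h
    have hfun : (fun t => u t 0)
        = fun t => Real.sin (a * Real.pi * t) * Real.cos (b * Real.pi * 0)
            - C * Real.sin (b * Real.pi * t) * Real.cos (a * Real.pi * 0) :=
      funext fun t => hu t 0
    have hzero : (fun t => u t 0) = fun _ : ℝ => (0 : ℝ) := funext fun t => h t 0
    have hder : HasDerivAt (fun t => Real.sin (a * Real.pi * t) * Real.cos (b * Real.pi * 0)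
            - C * Real.sin (b * Real.pi * t) * Real.cos (a * Real.pi * 0))
        (a * Real.pi * Real.cos (a * Real.pi * 0) * Real.cos (b * Real.pi * 0)
          - C * (b * Real.pi * Real.cos (b * Real.pi * 0)) * Real.cos (a * Real.pi * 0)) 0 :=
      ((zt_hasDerivAt_sin_mul (a * Real.pi) 0).mul_const (Real.cos (b * Real.pi * 0))).sub
        (((zt_hasDerivAt_sin_mul (b * Real.pi) 0).const_mul C).mul_const
          (Real.cos (a * Real.pi * 0)))
    have h1 : a * Real.pi * Real.cos (a * Real.pi * 0) * Real.cos (b * Real.pi * 0)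
          - C * (b * Real.pi * Real.cos (b * Real.pi * 0)) * Real.cos (a * Real.pi * 0) = 0 := by
      rw [← hder.deriv, ← hfun, hzero]
      simp
    have h2 : a * Real.pi - C * (b * Real.pi) = 0 := by simpa using h1
    have hπ := Real.pi_pos
    rcases Nat.even_or_odd (k + ℓ) with he | ho
    · have hCe : C = 1 := by rw [hC]; exact he.neg_one_pow
      rw [hCe] at h2
      have hab : a = b := by
        have := mul_right_cancel₀ (ne_of_gt hπ) (by linarith : a * Real.pi = b * Real.pi)
        exact this
      rw [ha, hb] at hab
      have : (k : ℝ) = (ℓ : ℝ) := by linarith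
      exact hkl (Nat.cast_inj.mp this)
    · have hCo : C = -1 := by rw [hC]; exact ho.neg_one_pow
      rw [hCo] at h2
      have hapos : 0 < a := by rw [ha]; positivity
      have hbpos : 0 < b := by rw [hb]; positivity
      nlinarith
end
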